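/- Let F be a field with char F = 3 and let A be the Matsuo algebra of the affine plane of order 3 over F. Define z := Σ_{u∈P} p_u, Z := F·z, T := the F-span of the 12 line sums Σ_{u∈L} p_u (L ranging over the lines of the affine plane), and R := { Σ_{u∈P} λ_u p_u : Σ_{u∈P} λ_u = 0 }. Then Z ⊂ T ⊂ R is a strictly increasing chain of (two-sided) ideals of A, with dim Z = 1, dim T = 6, dim R = 8; moreover the span of { x·y : x, y ∈ R } equals T, the span of { x·y : x, y ∈ T } equals Z, and x·y = 0 for all x, y ∈ Z. In particular R is a solvable ideal. -/

import Mathlib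

open Finset

/-- The Matsuo algebra `M_{1/2}(P3)` of the affine plane of order 3 over `F`: the free
`F`-module on the point set `P = (ℤ/3)²`, with the commutative bilinear multiplication
determined by `p_u p_u = p_u` and `p_u p_v = (1/4)(p_u + p_v − p_{−u−v})` for `u ≠ v`. -/
noncomputable def mMul (F : Type*) [Field F] (x y : ZMod 3 × ZMod 3 → F) :
    ZMod 3 × ZMod 3 → F :=
  ∑ u : ZMod 3 × ZMod 3, ∑ v : ZMod 3 × ZMod 3,
    (x u * y v) •
      (if u = v then Pi.single u (1 : F)
       else (4⁻¹ : F) • (Pi.single u (1 : F) + Pi.single v (1 : F) -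
         Pi.single (-u - v) (1 : F)) : ZMod 3 × ZMod 3 → F)

/-- The sum `Σ_{u ∈ s} p_u` in the Matsuo algebra. -/
noncomputable def pSum (F : Type*) [Field F] (s : Finset (ZMod 3 × ZMod 3)) :
    ZMod 3 × ZMod 3 → F :=
  ∑ u ∈ s, Pi.single u 1

/-- The line of the affine plane of order 3 through `a` with direction `w`
(a coset of the 1-dimensional subspace spanned by `w`). -/
def lineThru (a w : ZMod 3 × ZMod 3) : Finset (ZMod 3 × ZMod 3) :=
  Finset.image (fun t : ZMod 3 => a + t • w) Finset.univ

/-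
In characteristic 3 we have `4⁻¹ = 1` and `-2u = u`, so `p_u p_v = p_u + p_v - p_{-u-v}` for
all `u, v`. Hence `x y = ε(y) x + ε(x) y - x ∗ y`, where `ε` is the coefficient sum
(`coeffSum`) and `x ∗ y = Σ x_u y_v p_{-u-v}` (`conv`) is the group-algebra product twisted by
inversion. The functional `ε` and the first moments `μ_χ(x) = Σ χ(u) x_u` (`χ` additive) behave
like an augmentation and its derivations under `∗`, so `R = ker ε` and
`K = ker ε ∩ ⋂_χ ker μ_χ` (`momentKer`) are ideals and `R R ⊆ K`. Line sums lie in `K`; together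
with `p_0, p_(1,0), p_(0,1)`, which meet `K` trivially, they span the algebra, so `T = K` and
`dim T = 6`. Since `(p_{a+w} - p_{a-w})² = -Σ_{u ∈ a + ⟨w⟩} p_u`, the products `R R` span `T`.
The `∗`-product of two line sums counts the ways of writing a point as a sum of a point on each
line: once for non-parallel lines, 0 or 3 times for parallel ones. So `T T` spans `Z = F z`, and
`z` annihilates everything because `ε(z) = 9 = 0`.
-/

namespace MatsuoP3

abbrev Point := ZMod 3 × ZMod 3

section Field

variable {F : Type*} [Field F]

noncomputable def mMulₗ : (Point → F) →ₗ[F] (Point → F) →ₗ[F] (Point → F) :=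
  LinearMap.mk₂ F (mMul F)
    (fun x x' y => by simp only [mMul, Pi.add_apply, add_mul, add_smul, sum_add_distrib])
    (fun c x y => by simp only [mMul, Pi.smul_apply, smul_eq_mul, mul_assoc, mul_smul, smul_sum])
    (fun x y y' => by simp only [mMul, Pi.add_apply, mul_add, add_smul, sum_add_distrib])
    (fun c x y => by
      simp only [mMul, Pi.smul_apply, smul_eq_mul, mul_left_comm _ c, mul_smul, smul_sum])

@[simp] lemma mMulₗ_apply (x y : Point → F) : mMulₗ x y = mMul F x y := rfl

lemma mMul_single_single (u v : Point) :
    mMul F (Pi.single u 1) (Pi.single v 1) =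
      if u = v then Pi.single u 1
      else (4⁻¹ : F) • (Pi.single u 1 + Pi.single v 1 - Pi.single (-u - v) 1) := by
  rw [mMul, sum_eq_single u (fun u' _ hu' => by simp [hu']) (by simp),
    sum_eq_single v (fun v' _ hv' => by simp [hv']) (by simp)]
  simp

noncomputable def conv (x y : Point → F) : Point → F :=
  ∑ u, ∑ v, (x u * y v) • Pi.single (-u - v) 1

lemma conv_apply (x y : Point → F) (w : Point) : conv x y w = ∑ u, x u * y (-u - w) := by
  have hiff : ∀ u v : Point, w = -u - v ↔ v = -u - w := fun u v => by
    constructor <;> rintro rfl <;> abel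
  simp [conv, Finset.sum_apply, Pi.single_apply, hiff]

def coeffSum : (Point → F) →ₗ[F] F := ∑ u, LinearMap.proj u

def moment (χ : Point →+ F) : (Point → F) →ₗ[F] F := ∑ u, χ u • LinearMap.proj u

lemma coeffSum_apply (x : Point → F) : coeffSum x = ∑ u, x u := by
  simp [coeffSum, LinearMap.sum_apply]

lemma moment_apply (χ : Point →+ F) (x : Point → F) : moment χ x = ∑ u, χ u * x u := by
  simp [moment, LinearMap.sum_apply]

lemma coeffSum_single (u : Point) : coeffSum (Pi.single u (1 : F)) = 1 := by
  simp [coeffSum_apply]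

lemma moment_single (χ : Point →+ F) (u : Point) : moment χ (Pi.single u 1) = χ u := by
  simp [moment_apply, Pi.single_apply]

lemma coeffSum_conv (x y : Point → F) : coeffSum (conv x y) = coeffSum x * coeffSum y := by
  simp [conv, coeffSum_apply, sum_mul_sum]

lemma moment_conv (χ : Point →+ F) (x y : Point → F) :
    moment χ (conv x y) = -(moment χ x * coeffSum y + coeffSum x * moment χ y) := by
  simp only [conv, map_sum, map_smul, moment_single, smul_eq_mul]
  simp only [coeffSum_apply, moment_apply, map_sub, map_neg, sum_mul_sum, ← sum_add_distrib,
    ← sum_neg_distrib]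
  exact sum_congr rfl fun u _ => sum_congr rfl fun v _ => by ring

lemma conv_translate (x y : Point → F) (a b c : Point) :
    conv (fun u => x (u - a)) (fun u => y (u - b)) c = conv x y (c + a + b) := by
  simp only [conv_apply]
  exact Fintype.sum_equiv (Equiv.subRight a) _ _ fun u => by
    simp only [Equiv.subRight_apply]; congr 2; abel

lemma pSum_apply (s : Finset Point) (u : Point) : pSum F s u = if u ∈ s then 1 else 0 := by
  simp [pSum, Finset.sum_apply, Pi.single_apply]

lemma coeffSum_pSum (s : Finset Point) : coeffSum (pSum F s) = #s := by
  simp [pSum, coeffSum_single]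

lemma conv_pSum_apply (s t : Finset Point) (c : Point) :
    conv (pSum F s) (pSum F t) c = #{u | u ∈ s ∧ -u - c ∈ t} := by
  simp [conv_apply, pSum_apply, ← ite_and, and_comm]

end Field

section Lines

lemma lineThru_eq_of_ne_zero {a w : Point} (hw : w ≠ 0) : lineThru a w = {a, a + w, a - w} := by
  revert a w; decide

lemma mem_lineThru_iff_sub_mem {a w u : Point} : u ∈ lineThru a w ↔ u - a ∈ lineThru 0 w := by
  simp [lineThru, eq_sub_iff_add_eq']

def directions : Finset Point := {(1, 0), (0, 1), (1, 1), (1, 2)}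

lemma exists_lineThru_eq_directions {a w : Point} (hw : w ≠ 0) :
    ∃ d ∈ directions, lineThru a w = lineThru a d := by
  revert a w; decide

lemma card_lineThru_conv_modEq : ∀ d ∈ directions, ∀ d' ∈ directions, ∀ c : Point,
    #{u | u ∈ lineThru 0 d ∧ -u - c ∈ lineThru 0 d'} ≡
      #{u | u ∈ lineThru 0 d ∧ -u ∈ lineThru 0 d'} [MOD 3] := by
  decide

variable {F : Type*} [Field F]

lemma pSum_lineThru {a w : Point} (hw : w ≠ 0) :
    pSum F (lineThru a w) = Pi.single a 1 + Pi.single (a + w) 1 + Pi.single (a - w) 1 := by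
  have hdistinct :
      a ∉ ({a + w, a - w} : Finset Point) ∧ a + w ∉ ({a - w} : Finset Point) := by
    revert a w; decide
  rw [pSum, lineThru_eq_of_ne_zero hw, sum_insert hdistinct.1, sum_insert hdistinct.2,
    sum_singleton, add_assoc]

lemma pSum_lineThru_eq_translate (a w : Point) :
    pSum F (lineThru a w) = fun u => pSum F (lineThru 0 w) (u - a) := by
  ext u
  simp only [pSum_apply, mem_lineThru_iff_sub_mem (a := a) (u := u)]

end Lines

section Subspaces

variable (F : Type*) [Field F]

def momentKer : Submodule F (Point → F) :=
  LinearMap.ker coeffSum ⊓ ⨅ χ : Point →+ F, LinearMap.ker (moment χ)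

def lineSpan : Submodule F (Point → F) :=
  Submodule.span F {x | ∃ a w : Point, w ≠ 0 ∧ x = pSum F (lineThru a w)}

def frame : Fin 3 → Point := ![0, (1, 0), (0, 1)]

def frameSpan : Submodule F (Point → F) :=
  Submodule.span F (Set.range fun i => Pi.single (frame i) 1)

variable {F}

lemma mem_momentKer {x : Point → F} :
    x ∈ momentKer F ↔ coeffSum x = 0 ∧ ∀ χ : Point →+ F, moment χ x = 0 := by
  simp [momentKer, Submodule.mem_iInf]

lemma finrank_frameSpan : Module.finrank F (frameSpan F) = 3 := by
  rw [frameSpan, finrank_span_eq_card, Fintype.card_fin]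
  convert (Pi.basisFun F Point).linearIndependent.comp frame (by decide) using 1
  ext i : 1
  simp

lemma lineSpan_sup_frameSpan : lineSpan F ⊔ frameSpan F = ⊤ := by
  set M := lineSpan F ⊔ frameSpan F
  have hframe (i : Fin 3) : Pi.single (frame i) (1 : F) ∈ M :=
    Submodule.mem_sup_right (Submodule.subset_span ⟨i, rfl⟩)
  -- the line through `u ≠ v` is `{u, v, -u - v}`
  have hthird (u v w : Point) (huv : u ≠ v) (huvw : u + v + w = 0)
      (hu : Pi.single u (1 : F) ∈ M) (hv : Pi.single v (1 : F) ∈ M) :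
      Pi.single w (1 : F) ∈ M := by
    have hvu : v - u ≠ 0 := sub_ne_zero.2 huv.symm
    have hline : pSum F (lineThru u (v - u)) ∈ M :=
      Submodule.mem_sup_left (Submodule.subset_span ⟨u, v - u, hvu, rfl⟩)
    rw [pSum_lineThru hvu, add_sub_cancel,
      (by decide : ∀ u v w : Point, u + v + w = 0 → u - (v - u) = w) u v w huvw] at hline
    convert M.sub_mem (M.sub_mem hline hu) hv using 1
    abel
  have h20 := hthird 0 (1, 0) (2, 0) (by decide) (by decide) (hframe 0) (hframe 1)
  have h02 := hthird 0 (0, 1) (0, 2) (by decide) (by decide) (hframe 0) (hframe 2)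
  have h22 := hthird (1, 0) (0, 1) (2, 2) (by decide) (by decide) (hframe 1) (hframe 2)
  have h11 := hthird 0 (2, 2) (1, 1) (by decide) (by decide) (hframe 0) h22
  have h12 := hthird (2, 0) (0, 1) (1, 2) (by decide) (by decide) h20 (hframe 2)
  have h21 := hthird (1, 0) (0, 2) (2, 1) (by decide) (by decide) (hframe 1) h02
  have hpoints : ∀ u : Point, u = 0 ∨ u = (1, 0) ∨ u = (0, 1) ∨ u = (2, 0) ∨ u = (0, 2) ∨
      u = (2, 2) ∨ u = (1, 1) ∨ u = (1, 2) ∨ u = (2, 1) := by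
    decide
  rw [eq_top_iff, ← (Pi.basisFun F Point).span_eq, Submodule.span_le]
  rintro _ ⟨u, rfl⟩
  rw [Pi.basisFun_apply]
  rcases hpoints u with rfl | rfl | rfl | rfl | rfl | rfl | rfl | rfl | rfl
  exacts [hframe 0, hframe 1, hframe 2, h20, h02, h22, h11, h12, h21]

lemma six_le_finrank_lineSpan : 6 ≤ Module.finrank F (lineSpan F) := by
  have h := Submodule.finrank_add_le_finrank_add_finrank (lineSpan F) (frameSpan F)
  rw [lineSpan_sup_frameSpan, finrank_top, finrank_frameSpan,
    Module.finrank_fintype_fun_eq_card] at h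
  simpa [ZMod.card] using h

lemma mem_span_pSum_univ_of_forall_eq {x : Point → F} (hx : ∀ c, x c = x 0) :
    x ∈ Submodule.span F {pSum F univ} :=
  Submodule.mem_span_singleton.2 ⟨x 0, by ext c; simp [pSum_apply, hx c]⟩

lemma finrank_ker_coeffSum : Module.finrank F (LinearMap.ker (coeffSum (F := F))) = 8 := by
  have hsurj : Function.Surjective (coeffSum (F := F)) :=
    fun c => ⟨Pi.single 0 c, by simp [coeffSum_apply]⟩
  have h := LinearMap.finrank_range_add_finrank_ker (coeffSum (F := F))
  rw [LinearMap.range_eq_top.2 hsurj, finrank_top, Module.finrank_self,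
    Module.finrank_fintype_fun_eq_card] at h
  simp only [Fintype.card_prod, ZMod.card] at h
  omega

lemma finrank_span_pSum_univ : Module.finrank F (Submodule.span F {pSum F univ}) = 1 :=
  finrank_span_singleton fun h => by simpa [pSum_apply] using congrFun h 0

end Subspaces

section CharThree

variable {F : Type*} [Field F] [CharP F 3]

lemma three_eq_zero : (3 : F) = 0 := by exact_mod_cast CharP.cast_eq_zero F 3

lemma mMul_single_single_of_charP (u v : Point) :
    mMul F (Pi.single u 1) (Pi.single v 1) =
      Pi.single u 1 + Pi.single v 1 - Pi.single (-u - v) 1 := by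
  have h4 : (4⁻¹ : F) = 1 := by
    rw [show (4 : F) = 3 + 1 by norm_num, three_eq_zero, zero_add, inv_one]
  rw [mMul_single_single]
  split_ifs with h
  · rw [h, (by decide : ∀ p : Point, -p - p = p) v, add_sub_cancel_right]
  · rw [h4, one_smul]

lemma mMul_eq (x y : Point → F) :
    mMul F x y = coeffSum y • x + coeffSum x • y - conv x y := by
  have hexp : mMul F x y =
      ∑ u, ∑ v, (x u * y v) • (Pi.single u 1 + Pi.single v 1 - Pi.single (-u - v) 1) := by
    simp_rw [mMul, ← mMul_single_single, mMul_single_single_of_charP]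
  ext w
  rw [hexp, conv]
  simp [coeffSum_apply, Finset.sum_apply, Pi.single_apply, mul_add, mul_sub, sum_add_distrib,
    sum_sub_distrib, ← mul_sum, ← sum_mul]
  ring

lemma coeffSum_mMul (x y : Point → F) :
    coeffSum (mMul F x y) = coeffSum x * coeffSum y := by
  rw [mMul_eq, map_sub, map_add, map_smul, map_smul, coeffSum_conv, smul_eq_mul, smul_eq_mul]
  ring

lemma moment_mMul (χ : Point →+ F) (x y : Point → F) :
    moment χ (mMul F x y) = -(moment χ x * coeffSum y + coeffSum x * moment χ y) := by
  rw [mMul_eq, map_sub, map_add, map_smul, map_smul, moment_conv, smul_eq_mul, smul_eq_mul]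
  linear_combination
    (moment χ x * coeffSum y + coeffSum x * moment χ y) * three_eq_zero (F := F)

lemma coeffSum_pSum_univ : coeffSum (pSum F univ) = 0 := by
  rw [coeffSum_pSum, card_univ, show Fintype.card Point = 3 * 3 from rfl, Nat.cast_mul,
    CharP.cast_eq_zero, zero_mul]

lemma mMul_pSum_univ (y : Point → F) : mMul F y (pSum F univ) = 0 := by
  have hconv : conv y (pSum F univ) = coeffSum y • pSum F univ := by
    ext c
    simp [conv_apply, pSum_apply, coeffSum_apply]
  rw [mMul_eq, hconv, coeffSum_pSum_univ, zero_smul, zero_add, sub_self]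

lemma coeffSum_pSum_lineThru {a w : Point} (hw : w ≠ 0) :
    coeffSum (pSum F (lineThru a w)) = 0 := by
  simp only [pSum_lineThru hw, map_add, coeffSum_single]
  linear_combination three_eq_zero (F := F)

lemma pSum_lineThru_mem_momentKer {a w : Point} (hw : w ≠ 0) :
    pSum F (lineThru a w) ∈ momentKer F := by
  refine mem_momentKer.2 ⟨coeffSum_pSum_lineThru hw, fun χ => ?_⟩
  simp only [pSum_lineThru hw, map_add, moment_single, map_sub]
  linear_combination χ a * three_eq_zero (F := F)

lemma lineSpan_le_momentKer : lineSpan F ≤ momentKer F := by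
  rw [lineSpan, Submodule.span_le]
  rintro _ ⟨a, w, hw, rfl⟩
  exact pSum_lineThru_mem_momentKer hw

lemma disjoint_momentKer_frameSpan : Disjoint (momentKer F) (frameSpan F) := by
  rw [Submodule.disjoint_def]
  intro x hK hW
  obtain ⟨hsum, hmom⟩ := mem_momentKer.1 hK
  obtain ⟨c, rfl⟩ := (Submodule.mem_span_range_iff_exists_fun F).1 hW
  let coord (π : Point →+ ZMod 3) : Point →+ F :=
    (ZMod.castHom (dvd_refl 3) F).toAddMonoidHom.comp π
  have h1 : c 1 = 0 := by
    simpa [Fin.sum_univ_three, moment_single, frame, coord] using hmom (coord (.fst _ _))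
  have h2 : c 2 = 0 := by
    simpa [Fin.sum_univ_three, moment_single, frame, coord] using hmom (coord (.snd _ _))
  have h0 : c 0 = 0 := by simpa [Fin.sum_univ_three, coeffSum_single, h1, h2] using hsum
  simp [Fin.sum_univ_three, h0, h1, h2]

lemma finrank_momentKer_le : Module.finrank F (momentKer F) ≤ 6 := by
  have h := Submodule.finrank_add_finrank_le_of_disjoint (disjoint_momentKer_frameSpan (F := F))
  rw [finrank_frameSpan, Module.finrank_fintype_fun_eq_card] at h
  simpa [ZMod.card] using h

lemma finrank_lineSpan : Module.finrank F (lineSpan F) = 6 :=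
  le_antisymm ((Submodule.finrank_mono lineSpan_le_momentKer).trans finrank_momentKer_le)
    six_le_finrank_lineSpan

lemma lineSpan_eq_momentKer : lineSpan F = momentKer F :=
  Submodule.eq_of_le_of_finrank_le lineSpan_le_momentKer
    (finrank_momentKer_le.trans six_le_finrank_lineSpan)

lemma mMul_mem_ker_coeffSum (y : Point → F) {x : Point → F}
    (hx : x ∈ LinearMap.ker (coeffSum (F := F))) : mMul F y x ∈ LinearMap.ker coeffSum := by
  rw [LinearMap.mem_ker] at hx ⊢
  rw [coeffSum_mMul, hx, mul_zero]

lemma mMul_mem_momentKer (y : Point → F) {x : Point → F} (hx : x ∈ momentKer F) :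
    mMul F y x ∈ momentKer F := by
  obtain ⟨hsum, hmom⟩ := mem_momentKer.1 hx
  exact mem_momentKer.2 ⟨by rw [coeffSum_mMul, hsum, mul_zero], fun χ => by
    rw [moment_mMul, hsum, hmom χ, mul_zero, mul_zero, add_zero, neg_zero]⟩

lemma mMul_mem_momentKer_of_coeffSum {x y : Point → F} (hx : coeffSum x = 0)
    (hy : coeffSum y = 0) : mMul F x y ∈ momentKer F :=
  mem_momentKer.2 ⟨by rw [coeffSum_mMul, hx, zero_mul], fun χ => by
    rw [moment_mMul, hx, hy, mul_zero, zero_mul, add_zero, neg_zero]⟩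

lemma mMul_self_single_sub_single {a w : Point} (hw : w ≠ 0) :
    mMul F (Pi.single (a + w) 1 - Pi.single (a - w) 1) (Pi.single (a + w) 1 - Pi.single (a - w) 1)
      = -pSum F (lineThru a w) := by
  have hsums : -(a + w) - (a - w) = a ∧ -(a - w) - (a + w) = a ∧
      -(a + w) - (a + w) = a + w ∧ -(a - w) - (a - w) = a - w := by
    revert a w; decide
  simp only [← mMulₗ_apply, map_sub, LinearMap.sub_apply]
  simp only [mMulₗ_apply, mMul_single_single_of_charP, hsums, pSum_lineThru hw]
  linear_combination (norm := module) three_eq_zero (F := F) • (Pi.single a 1 : Point → F)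

lemma mMul_eq_zero_of_mem_span_pSum_univ (y : Point → F) {x : Point → F}
    (hx : x ∈ Submodule.span F {pSum F univ}) : mMul F y x = 0 := by
  obtain ⟨c, rfl⟩ := Submodule.mem_span_singleton.1 hx
  rw [← mMulₗ_apply, map_smul, mMulₗ_apply, mMul_pSum_univ, smul_zero]

lemma conv_pSum_lineThru_apply_eq_apply_zero {a b w w' : Point} (hw : w ≠ 0) (hw' : w' ≠ 0)
    (c : Point) :
    conv (pSum F (lineThru a w)) (pSum F (lineThru b w')) c =
      conv (pSum F (lineThru a w)) (pSum F (lineThru b w')) 0 := by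
  obtain ⟨d, hd, hwd⟩ := exists_lineThru_eq_directions (a := a) hw
  obtain ⟨d', hd', hwd'⟩ := exists_lineThru_eq_directions (a := b) hw'
  have hlines (c : Point) : conv (pSum F (lineThru a d)) (pSum F (lineThru b d')) c =
      #{u | u ∈ lineThru 0 d ∧ -u ∈ lineThru 0 d'} := by
    rw [pSum_lineThru_eq_translate a, pSum_lineThru_eq_translate b, conv_translate,
      conv_pSum_apply]
    exact (CharP.natCast_eq_natCast F 3).2 (card_lineThru_conv_modEq d hd d' hd' _)
  rw [hwd, hwd', hlines, hlines]

lemma mMul_pSum_lineThru_mem_span {a b w w' : Point} (hw : w ≠ 0) (hw' : w' ≠ 0) :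
    mMul F (pSum F (lineThru a w)) (pSum F (lineThru b w')) ∈ Submodule.span F {pSum F univ} := by
  rw [mMul_eq, coeffSum_pSum_lineThru hw, coeffSum_pSum_lineThru hw', zero_smul, zero_smul,
    zero_add, zero_sub]
  exact Submodule.neg_mem _
    (mem_span_pSum_univ_of_forall_eq (conv_pSum_lineThru_apply_eq_apply_zero hw hw'))

lemma mMul_pSum_lineThru_axes :
    mMul F (pSum F (lineThru 0 (1, 0))) (pSum F (lineThru 0 (0, 1))) = -pSum F univ := by
  have hconv : conv (pSum F (lineThru 0 (1, 0))) (pSum F (lineThru 0 (0, 1))) = pSum F univ := by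
    ext c
    have hcard : #{u | u ∈ lineThru 0 (1, 0) ∧ -u - c ∈ lineThru 0 (0, 1)} = 1 := by
      revert c; decide
    rw [conv_pSum_apply, hcard, pSum_apply, if_pos (mem_univ c), Nat.cast_one]
  rw [mMul_eq, coeffSum_pSum_lineThru (by decide), coeffSum_pSum_lineThru (by decide),
    zero_smul, zero_smul, zero_add, zero_sub, hconv]

lemma span_mMul_ker_coeffSum :
    Submodule.span F {m | ∃ x ∈ LinearMap.ker coeffSum, ∃ y ∈ LinearMap.ker coeffSum,
      m = mMul F x y} = lineSpan F := by
  apply le_antisymm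
  · rw [Submodule.span_le, lineSpan_eq_momentKer]
    rintro _ ⟨x, hx, y, hy, rfl⟩
    exact mMul_mem_momentKer_of_coeffSum hx hy
  · rw [lineSpan, Submodule.span_le]
    rintro _ ⟨a, w, hw, rfl⟩
    have hdiff : Pi.single (a + w) 1 - Pi.single (a - w) 1 ∈ LinearMap.ker (coeffSum (F := F)) := by
      simp [coeffSum_single]
    rw [← neg_neg (pSum F _), ← mMul_self_single_sub_single hw]
    exact Submodule.neg_mem _ (Submodule.subset_span ⟨_, hdiff, _, hdiff, rfl⟩)

lemma span_mMul_lineSpan :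
    Submodule.span F {m | ∃ x ∈ lineSpan F, ∃ y ∈ lineSpan F, m = mMul F x y} =
      Submodule.span F {pSum F univ} := by
  apply le_antisymm
  · have hset : {m | ∃ x ∈ lineSpan F, ∃ y ∈ lineSpan F, m = mMul F x y} =
        Set.image2 (fun x y => mMulₗ x y) (lineSpan F) (lineSpan F) := by
      ext m; simp [Set.mem_image2, eq_comm]
    rw [hset, ← Submodule.map₂_eq_span_image2, lineSpan, Submodule.map₂_span_span,
      Submodule.span_le]
    rintro _ ⟨_, ⟨a, w, hw, rfl⟩, _, ⟨b, w', hw', rfl⟩, rfl⟩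
    exact mMul_pSum_lineThru_mem_span hw hw'
  · rw [Submodule.span_le, Set.singleton_subset_iff, ← neg_neg (pSum F univ),
      ← mMul_pSum_lineThru_axes]
    have hline (w : Point) (hw : w ≠ 0) : pSum F (lineThru 0 w) ∈ lineSpan F :=
      Submodule.subset_span ⟨0, w, hw, rfl⟩
    exact Submodule.neg_mem _ (Submodule.subset_span
      ⟨_, hline (1, 0) (by decide), _, hline (0, 1) (by decide), rfl⟩)

lemma span_pSum_univ_le_lineSpan : Submodule.span F {pSum F univ} ≤ lineSpan F := by
  rw [← span_mMul_lineSpan, Submodule.span_le, lineSpan_eq_momentKer]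
  rintro _ ⟨x, -, y, hy, rfl⟩
  exact mMul_mem_momentKer x hy

end CharThree

end MatsuoP3

open MatsuoP3

/-- For `char F = 3`, the Matsuo algebra `A` of the affine plane of order 3
has a strictly increasing chain of ideals `Z ⊂ T ⊂ R` with `dim Z = 1`, `dim T = 6`,
`dim R = 8`, where `Z = F·(Σ_{u∈P} p_u)`, `T` is the span of the 12 line sums, and `R` is the
set of zero-coefficient-sum elements; moreover `span(R·R) = T`, `span(T·T) = Z` and `Z·Z = 0`.
In particular `R` is a solvable ideal. -/
theorem stmt_14 (F : Type*) [Field F] [CharP F 3] :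
    let Z : Submodule F (ZMod 3 × ZMod 3 → F) :=
      Submodule.span F {pSum F Finset.univ}
    let T : Submodule F (ZMod 3 × ZMod 3 → F) :=
      Submodule.span F {x | ∃ a w : ZMod 3 × ZMod 3, w ≠ 0 ∧ x = pSum F (lineThru a w)}
    let R : Submodule F (ZMod 3 × ZMod 3 → F) :=
      LinearMap.ker ((∑ u : ZMod 3 × ZMod 3, LinearMap.proj u :
        (ZMod 3 × ZMod 3 → F) →ₗ[F] F))
    (∀ x ∈ Z, ∀ y : ZMod 3 × ZMod 3 → F, mMul F y x ∈ Z) ∧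
    (∀ x ∈ T, ∀ y : ZMod 3 × ZMod 3 → F, mMul F y x ∈ T) ∧
    (∀ x ∈ R, ∀ y : ZMod 3 × ZMod 3 → F, mMul F y x ∈ R) ∧
    Z < T ∧ T < R ∧
    Module.finrank F Z = 1 ∧ Module.finrank F T = 6 ∧ Module.finrank F R = 8 ∧
    Submodule.span F {m : ZMod 3 × ZMod 3 → F | ∃ x ∈ R, ∃ y ∈ R, m = mMul F x y} = T ∧
    Submodule.span F {m : ZMod 3 × ZMod 3 → F | ∃ x ∈ T, ∃ y ∈ T, m = mMul F x y} = Z ∧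
    (∀ x ∈ Z, ∀ y ∈ Z, mMul F x y = 0) := by
  intro Z T R
  have hT : T = momentKer F := lineSpan_eq_momentKer
  have hZT : Z ≤ T := span_pSum_univ_le_lineSpan
  have hTR : T ≤ R := hT ▸ inf_le_left
  have hZ1 : Module.finrank F Z = 1 := finrank_span_pSum_univ
  have hT6 : Module.finrank F T = 6 := finrank_lineSpan
  have hR8 : Module.finrank F R = 8 := finrank_ker_coeffSum
  refine ⟨fun x hx y => ?_, fun x hx y => hT ▸ mMul_mem_momentKer y (hT ▸ hx),
    fun x hx y => mMul_mem_ker_coeffSum y hx,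
    Submodule.lt_of_le_of_finrank_lt_finrank hZT (by omega),
    Submodule.lt_of_le_of_finrank_lt_finrank hTR (by omega), hZ1, hT6, hR8,
    span_mMul_ker_coeffSum, span_mMul_lineSpan,
    fun x _ y hy => mMul_eq_zero_of_mem_span_pSum_univ x hy⟩
  rw [mMul_eq_zero_of_mem_span_pSum_univ y hx]
  exact Z.zero_mem
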